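/- arXiv:0905.3279 — 5 statements merged into one kernel-verified Lean document; each statement's English description precedes it below -/
import Mathlib

section
/- Let A ⊆ ℝ^d be compact and r > 0 with r > diam A. Then every point z on the boundary of the open r-parallel set A_{<r} is a regular point of the distance function d_A, i.e., z does not belong to the convex hull of the set Σ_A(z) = {a ∈ A : |z − a| = dist(z, A)} of nearest points of A to z. -/
/-!
Every nearest point of `A` to a point `z` of the frontier of `A_{<r}` lies on the sphere of
radius `r` about `z`, and any two of them are less than `r` apart. For two points `a, b` of that
sphere, `‖b - a‖ < r` forces `⟪z - a, z - b⟫ > r² / 2`, so all nearest points lie in an open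
half-space that does not contain `z`; hence neither does their convex hull.
-/

open Metric
open scoped RealInnerProductSpace

section InnerProductSpace

variable {E : Type*} [NormedAddCommGroup E] [InnerProductSpace ℝ E]

theorem half_sq_lt_inner_sub_of_mem_sphere {z a b : E} {r : ℝ} (ha : a ∈ sphere z r)
    (hb : b ∈ sphere z r) (hab : dist a b < r) : r ^ 2 / 2 < ⟪z - a, z - b⟫ := by
  rw [mem_sphere', dist_eq_norm] at ha hb
  rw [dist_comm, dist_eq_norm] at hab
  have hsq : ‖b - a‖ ^ 2 = ‖z - a‖ ^ 2 - 2 * ⟪z - a, z - b⟫ + ‖z - b‖ ^ 2 := by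
    rw [← norm_sub_sq_real, sub_sub_sub_cancel_left]
  rw [ha, hb] at hsq
  nlinarith [norm_nonneg (b - a)]

theorem center_notMem_convexHull_of_subset_sphere {S : Set E} {z : E} {r : ℝ}
    (hS : S ⊆ sphere z r) (hdist : ∀ a ∈ S, ∀ b ∈ S, dist a b < r) :
    z ∉ convexHull ℝ S := by
  intro hz
  obtain ⟨a, ha⟩ := convexHull_nonempty_iff.mp ⟨z, hz⟩
  have hhalf : Convex ℝ {x : E | r ^ 2 / 2 < ⟪z - a, z - x⟫} := by
    simp only [inner_sub_right, lt_sub_comm (a := r ^ 2 / 2)]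
    exact convex_halfSpace_lt (innerₛₗ ℝ (z - a)).isLinear _
  have hzhalf : r ^ 2 / 2 < ⟪z - a, z - z⟫ :=
    convexHull_min (fun b hb => half_sq_lt_inner_sub_of_mem_sphere (hS ha) (hS hb)
      (hdist a ha b hb)) hhalf hz
  rw [sub_self, inner_zero_right] at hzhalf
  linarith [sq_nonneg r]

end InnerProductSpace

theorem infDist_eq_of_mem_frontier_thickening {X : Type*} [PseudoMetricSpace X] {A : Set X}
    {r : ℝ} (hr : 0 ≤ r) {z : X} (hz : z ∈ frontier (thickening r A)) : infDist z A = r := by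
  rw [infDist, frontier_thickening_subset A hz, ENNReal.toReal_ofReal hr]

theorem stmt_1_general (d : ℕ) (A : Set (EuclideanSpace ℝ (Fin d)))
    (hA : IsCompact A) (r : ℝ) (hr : Metric.diam A < r)
    (z : EuclideanSpace ℝ (Fin d)) (hz : z ∈ frontier (Metric.thickening r A)) :
    z ∉ convexHull ℝ {a ∈ A | dist z a = Metric.infDist z A} := by
  have hinf : infDist z A = r := infDist_eq_of_mem_frontier_thickening (diam_nonneg.trans hr.le) hz
  refine center_notMem_convexHull_of_subset_sphere (r := r) (fun a ha => ?_) fun a ha b hb => ?_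
  · rw [mem_sphere', ha.2, hinf]
  · exact (dist_le_diam_of_mem hA.isBounded ha.1 hb.1).trans_lt hr

theorem stmt_1 (d : ℕ) (A : Set (EuclideanSpace ℝ (Fin d)))
    (hA : IsCompact A) (hAne : A.Nonempty) (r : ℝ) (hr : Metric.diam A < r)
    (z : EuclideanSpace ℝ (Fin d)) (hz : z ∈ frontier (Metric.thickening r A)) :
    z ∉ convexHull ℝ {a ∈ A | dist z a = Metric.infDist z A} :=
  stmt_1_general d A hA r hr z hz
end

section
/- For every compact set A ⊂ ℝ^d, lim_{r→0} r · H^{d−1}(∂A_r) = 0. -/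
open MeasureTheory Metric Filter Set Module
open scoped Topology ENNReal NNReal RealInnerProductSpace

/-!
The frontier of `A_r` lies in the level set `S_r = {x | infDist x A = r}`, and we show the weak
Kneser-type bound `r · H^{d-1}(S_r) ≤ C · vol(A_r \ A)` with `C` independent of `r`; since `A` is
compact, `vol(A_r \ A) → vol A - vol A = 0`.

For the bound, take a maximal `r/4`-separated set `M ⊆ S_r`. Pushing each of its points a distance
`r/16` towards a nearest point of `A` yields disjoint balls of radius `r/16` inside `A_r \ A`, so
`#M ≲ r^{-d} vol(A_r \ A)`. The balls of radius `r/4` around `M` cover `S_r`; split them further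
according to a finite net of directions `v` of the unit sphere close to the direction from the
nearest point of `A`. On such a piece the orthogonal projection onto `v⊥` has a `3`-Lipschitz
inverse, because no point of `S_r` is closer than `r` to the nearest point of another one, so the
piece has `H^{d-1}`-measure `≲ r^{d-1}`.
-/

lemma hausdorffMeasure_le_of_dist_le_mul_dist {X Y : Type*} [MetricSpace X] [MeasurableSpace X]
    [BorelSpace X] [MetricSpace Y] [MeasurableSpace Y] [BorelSpace Y] {f : X → Y} {s : Set X}
    {K : ℝ≥0} {m : ℝ} (hm : 0 ≤ m) (h : ∀ x ∈ s, ∀ y ∈ s, dist x y ≤ K * dist (f x) (f y)) :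
    μH[m] s ≤ (K : ℝ≥0∞) ^ m * μH[m] (f '' s) := by
  have hanti : AntilipschitzWith K (f ∘ ((↑) : s → X)) :=
    AntilipschitzWith.of_le_mul_dist fun x y ↦ h x x.2 y y.2
  have := hanti.le_hausdorffMeasure_image hm univ
  rwa [image_univ, range_comp, ← isometry_subtype_coe.hausdorffMeasure_image (Or.inl hm),
    image_univ, Subtype.range_coe] at this

lemma Submodule.hausdorffMeasure_le_of_subset_closedBall {E : Type*} [NormedAddCommGroup E]
    [NormedSpace ℝ E] [MeasurableSpace E] [BorelSpace E] (K : Submodule ℝ E) [FiniteDimensional ℝ K]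
    {s : Set E} {c : E} {ρ : ℝ} (hsK : s ⊆ K) (hc : c ∈ K) (hρ : 0 ≤ ρ) (hs : s ⊆ closedBall c ρ) :
    μH[finrank ℝ K] s ≤
      ENNReal.ofReal (ρ ^ finrank ℝ K) * μH[finrank ℝ K] (closedBall (0 : K) 1) := by
  have hm : (0 : ℝ) ≤ finrank ℝ K := Nat.cast_nonneg _
  rw [← image_preimage_eq_of_subset (hsK.trans (Subtype.range_coe (s := (K : Set E))).superset),
    isometry_subtype_coe.hausdorffMeasure_image (Or.inl hm),
    ← Measure.addHaar_closedBall' _ ⟨c, hc⟩ hρ]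
  exact measure_mono fun x hx ↦ hs hx

section Projection

variable {F : Type*} [NormedAddCommGroup F] [InnerProductSpace ℝ F] {v w q : F} {r : ℝ}

lemma starProjection_orthogonal_span_unit_singleton (hv : ‖v‖ = 1) (w : F) :
    (ℝ ∙ v)ᗮ.starProjection w = w - ⟪v, w⟫ • v := by
  rw [Submodule.starProjection_orthogonal_val, Submodule.starProjection_unit_singleton ℝ hv]

lemma inner_starProjection_orthogonal_span_unit_singleton (hv : ‖v‖ = 1) (w q : F) :
    ⟪w, q⟫ = ⟪v, w⟫ * ⟪v, q⟫ + ⟪(ℝ ∙ v)ᗮ.starProjection w, (ℝ ∙ v)ᗮ.starProjection q⟫ := by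
  simp only [starProjection_orthogonal_span_unit_singleton hv, inner_sub_left, inner_sub_right,
    real_inner_smul_left, real_inner_smul_right, real_inner_self_eq_norm_sq, hv,
    real_inner_comm v w]
  ring

lemma norm_sq_eq_inner_sq_add_norm_sq_starProjection (hv : ‖v‖ = 1) (w : F) :
    ‖w‖ ^ 2 = ⟪v, w⟫ ^ 2 + ‖(ℝ ∙ v)ᗮ.starProjection w‖ ^ 2 := by
  rw [← real_inner_self_eq_norm_sq, ← real_inner_self_eq_norm_sq,
    inner_starProjection_orthogonal_span_unit_singleton hv w w, sq]

lemma norm_starProjection_le_half (hv : ‖v‖ = 1) (hq : ‖q‖ = r) (hqv : 7 / 8 * r ≤ ⟪v, q⟫) :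
    ‖(ℝ ∙ v)ᗮ.starProjection q‖ ≤ r / 2 := by
  have := norm_sq_eq_inner_sq_add_norm_sq_starProjection hv q
  have hr : 0 ≤ r := hq ▸ norm_nonneg q
  nlinarith [norm_nonneg ((ℝ ∙ v)ᗮ.starProjection q)]

/-- `‖w + q‖ ≥ ‖q‖` forces `⟪w, q⟫ ≥ -‖w‖² / 2`, and as `q` lies in a narrow cone around `v` this
rules out a large negative component of `w` along `v`. -/
lemma neg_inner_le_of_le_norm_add (hr : 0 < r) (hv : ‖v‖ = 1) (hw : ‖w‖ ≤ r / 2) (hq : ‖q‖ = r)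
    (hqv : 7 / 8 * r ≤ ⟪v, q⟫) (hwq : r ≤ ‖w + q‖) :
    7 / 8 * -⟪v, w⟫ ≤ ‖w‖ / 4 + ‖(ℝ ∙ v)ᗮ.starProjection w‖ / 2 := by
  set P := (ℝ ∙ v)ᗮ.starProjection
  have hwq' : -‖w‖ ^ 2 ≤ 2 * ⟪w, q⟫ := by
    have := norm_add_sq_real w q
    nlinarith [norm_nonneg (w + q)]
  have hpq : ⟪P w, P q⟫ ≤ ‖P w‖ * (r / 2) :=
    (real_inner_le_norm _ _).trans
      (mul_le_mul_of_nonneg_left (norm_starProjection_le_half hv hq hqv) (norm_nonneg _))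
  rw [inner_starProjection_orthogonal_span_unit_singleton hv] at hwq'
  suffices 7 / 8 * -⟪v, w⟫ * r ≤ (‖w‖ / 4 + ‖P w‖ / 2) * r from le_of_mul_le_mul_right this hr
  rcases le_or_gt ⟪v, w⟫ 0 with ht | ht
  · nlinarith [norm_nonneg w]
  · nlinarith [norm_nonneg w, norm_nonneg (P w)]

lemma norm_le_three_mul_norm_starProjection {q' : F} (hr : 0 < r) (hv : ‖v‖ = 1)
    (hw : ‖w‖ ≤ r / 2) (hq : ‖q‖ = r) (hq' : ‖q'‖ = r) (hqv : 7 / 8 * r ≤ ⟪v, q⟫)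
    (hq'v : 7 / 8 * r ≤ ⟪v, q'⟫) (hwq : r ≤ ‖w + q‖) (hwq' : r ≤ ‖q' - w‖) :
    ‖w‖ ≤ 3 * ‖(ℝ ∙ v)ᗮ.starProjection w‖ := by
  have hneg := neg_inner_le_of_le_norm_add hr hv hw hq hqv hwq
  have hpos := neg_inner_le_of_le_norm_add (w := -w) hr hv (by rwa [norm_neg]) hq' hq'v
    (by rwa [neg_add_eq_sub])
  simp only [norm_neg, map_neg, inner_neg_right, neg_neg] at hpos
  have := norm_sq_eq_inner_sq_add_norm_sq_starProjection hv w
  nlinarith [norm_nonneg w, norm_nonneg ((ℝ ∙ v)ᗮ.starProjection w), sq_abs ⟪v, w⟫]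

end Projection

section LevelSet

variable {X : Type*} [MetricSpace X] {A : Set X} {r : ℝ}

lemma IsCompact.exists_mem_dist_eq_of_infDist_eq (hA : IsCompact A) (hr : 0 < r) {x : X}
    (hx : infDist x A = r) : ∃ a ∈ A, dist x a = r := by
  have hne : A.Nonempty := by
    by_contra h
    rw [not_nonempty_iff_eq_empty.mp h, infDist_empty] at hx
    exact hr.ne hx
  obtain ⟨a, ha, hxa⟩ := hA.exists_infDist_eq_dist hne x
  exact ⟨a, ha, hxa ▸ hx⟩

lemma IsCompact.isCompact_infDist_levelSet [ProperSpace X] (hA : IsCompact A) (hr : 0 < r) :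
    IsCompact {x | infDist x A = r} := by
  refine (hA.cthickening (r := r)).of_isClosed_subset
    (isClosed_eq (continuous_infDist_pt A) continuous_const) fun x hx ↦ ?_
  obtain ⟨a, ha, hxa⟩ := hA.exists_mem_dist_eq_of_infDist_eq hr hx
  exact mem_cthickening_of_dist_le x a r A ha hxa.le

lemma frontier_cthickening_subset_infDist_levelSet (A : Set X) (hr : 0 ≤ r) :
    frontier (cthickening r A) ⊆ {x | infDist x A = r} := fun x hx ↦ by
  have hx' : infEDist x A = ENNReal.ofReal r := frontier_cthickening_subset A hx
  show infDist x A = r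
  rw [infDist, hx', ENNReal.toReal_ofReal hr]

end LevelSet

lemma IsCompact.packingNumber_ne_top {X : Type*} [PseudoEMetricSpace X] {s : Set X} {ε : ℝ≥0}
    (hs : IsCompact s) (hε : ε ≠ 0) : packingNumber ε s ≠ ⊤ := by
  obtain ⟨C, -, hCfin, hC⟩ := exists_finite_isCover_of_isCompact (ε := ε / 2) (by simpa) hs
  refine ne_top_of_le_ne_top (Set.encard_ne_top_iff.mpr hCfin) ?_
  calc packingNumber ε s = packingNumber (2 * (ε / 2)) s := by rw [mul_div_cancel₀ _ two_ne_zero]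
    _ ≤ externalCoveringNumber (ε / 2) s := packingNumber_two_mul_le_externalCoveringNumber _ _
    _ ≤ C.encard := hC.externalCoveringNumber_le_encard

lemma exists_ball_subset_cthickening_diff {E : Type*} [NormedAddCommGroup E] [NormedSpace ℝ E]
    {A : Set E} {r t : ℝ} (hA : IsCompact A) (ht : 0 < t) (htr : 2 * t ≤ r) {z : E}
    (hz : infDist z A = r) : ∃ y, dist y z = t ∧ ball y t ⊆ cthickening r A \ A := by
  have hr : 0 < r := by linarith
  obtain ⟨a, ha, hza⟩ := hA.exists_mem_dist_eq_of_infDist_eq hr hz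
  set y := AffineMap.lineMap z a (t / r)
  have hyz : dist y z = t := by
    rw [dist_lineMap_left, hza, Real.norm_of_nonneg (by positivity), div_mul_cancel₀ _ hr.ne']
  have hya : dist y a = r - t := by
    rw [dist_lineMap_right, hza, Real.norm_of_nonneg (by rw [sub_nonneg, div_le_one hr]; linarith)]
    field_simp
  refine ⟨y, hyz, fun w hw ↦ ⟨?_, fun hwA ↦ ?_⟩⟩
  · exact mem_cthickening_of_dist_le w a r A ha (by linarith [dist_triangle w y a, mem_ball.mp hw])
  · have := infDist_le_infDist_add_dist (x := z) (y := w) (s := A)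
    rw [hz, infDist_zero_of_mem hwA] at this
    linarith [dist_triangle z y w, mem_ball'.mp hw, dist_comm y z]

lemma IsCompact.exists_finset_isSeparated_cover_infDist_levelSet {X : Type*} [MetricSpace X]
    [ProperSpace X] {A : Set X} {r : ℝ} (hA : IsCompact A) (hr : 0 < r) :
    ∃ M : Finset X, (∀ z ∈ M, infDist z A = r) ∧ (M : Set X).Pairwise (fun x y ↦ r / 4 < dist x y) ∧
      {x | infDist x A = r} ⊆ ⋃ z ∈ M, closedBall z (r / 4) := by
  set ε : ℝ≥0 := (r / 4).toNNReal
  have hε : (ε : ℝ) = r / 4 := Real.coe_toNNReal _ (by positivity)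
  have hfin := (hA.isCompact_infDist_levelSet hr).packingNumber_ne_top (ε := ε) (by simpa [ε])
  set M := maximalSeparatedSet ε {x | infDist x A = r}
  have hMfin : M.Finite := by
    rw [← encard_ne_top_iff, encard_maximalSeparatedSet hfin]
    exact hfin
  refine ⟨hMfin.toFinset, fun z hz ↦ ?_, ?_, ?_⟩
  · exact (maximalSeparatedSet_subset (hMfin.mem_toFinset.mp hz) : z ∈ {x | infDist x A = r})
  · intro x hx y hy hxy
    have :=
      isSeparated_maximalSeparatedSet (hMfin.mem_toFinset.mp hx) (hMfin.mem_toFinset.mp hy) hxy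
    change ENNReal.ofReal (r / 4) < edist x y at this
    rwa [edist_dist, ENNReal.ofReal_lt_ofReal_iff_of_nonneg (by positivity)] at this
  · have := isCover_iff_subset_iUnion_closedBall.mp (isCover_maximalSeparatedSet hfin)
    simpa [hε] using this

lemma card_mul_measure_ball_le_measure_cthickening_diff {E : Type*} [NormedAddCommGroup E]
    [NormedSpace ℝ E] [MeasurableSpace E] [BorelSpace E] (μ : Measure E) [μ.IsAddHaarMeasure]
    {A : Set E} {r : ℝ} (hA : IsCompact A) (hr : 0 < r) {N : Finset E}
    (hN : ∀ z ∈ N, infDist z A = r) (hsep : (N : Set E).Pairwise fun x y ↦ r / 4 < dist x y) :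
    N.card * μ (ball 0 (r / 16)) ≤ μ (cthickening r A \ A) := by
  choose! y hyz hy using fun z hz ↦
    exists_ball_subset_cthickening_diff hA (t := r / 16) (by positivity) (by linarith) (hN z hz)
  have hdisj : (N : Set E).PairwiseDisjoint fun z ↦ ball (y z) (r / 16) := by
    intro z₁ hz₁ z₂ hz₂ hne
    refine ball_disjoint_ball ?_
    linarith [hsep hz₁ hz₂ hne, dist_triangle4 z₁ (y z₁) (y z₂) z₂, hyz z₁ hz₁, hyz z₂ hz₂,
      dist_comm z₁ (y z₁)]
  calc N.card * μ (ball 0 (r / 16)) = ∑ z ∈ N, μ (ball (y z) (r / 16)) := by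
        simp [Measure.addHaar_ball_center]
    _ = μ (⋃ z ∈ N, ball (y z) (r / 16)) :=
        (measure_biUnion_finset hdisj fun _ _ ↦ measurableSet_ball).symm
    _ ≤ μ (cthickening r A \ A) := measure_mono (iUnion₂_subset hy)

section Pieces

variable {E : Type*} [NormedAddCommGroup E] [InnerProductSpace ℝ E] {A : Set E} {r : ℝ} {v : E}

/-- The points of the level set `infDist · A = r` near `z` whose direction from a nearest point of
`A` lies in a narrow cone around `v`: a graph over the hyperplane `v⊥`. -/
def levelSetPiece (A : Set E) (r : ℝ) (z v : E) : Set E :=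
  {x | dist x z ≤ r / 4 ∧ infDist x A = r ∧ ∃ a ∈ A, dist x a = r ∧ 7 / 8 * r ≤ ⟪v, x - a⟫}

lemma dist_le_three_mul_dist_starProjection_of_mem_levelSetPiece (hr : 0 < r) (hv : ‖v‖ = 1)
    {z x y : E} (hx : x ∈ levelSetPiece A r z v) (hy : y ∈ levelSetPiece A r z v) :
    dist x y ≤ 3 * dist ((ℝ ∙ v)ᗮ.starProjection x) ((ℝ ∙ v)ᗮ.starProjection y) := by
  obtain ⟨hxz, hxA, a, ha, hxa, hav⟩ := hx
  obtain ⟨hyz, hyA, b, hb, hyb, hbv⟩ := hy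
  rw [dist_eq_norm, dist_eq_norm, ← map_sub]
  refine norm_le_three_mul_norm_starProjection (q := y - b) (q' := x - a) hr hv ?_
    (by rwa [← dist_eq_norm]) (by rwa [← dist_eq_norm]) hbv hav ?_ ?_
  · rw [← dist_eq_norm]
    linarith [dist_triangle_right x y z]
  · rw [sub_add_sub_cancel, ← dist_eq_norm, ← hxA]
    exact infDist_le_dist_of_mem hb
  · rw [sub_sub_sub_cancel_left, ← dist_eq_norm, ← hyA]
    exact infDist_le_dist_of_mem ha

lemma hausdorffMeasure_levelSetPiece_le [FiniteDimensional ℝ E] [MeasurableSpace E]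
    [BorelSpace E] (hr : 0 < r) (hv : ‖v‖ = 1) (z : E) :
    μH[finrank ℝ (ℝ ∙ v)ᗮ] (levelSetPiece A r z v) ≤
      3 ^ finrank ℝ (ℝ ∙ v)ᗮ * ENNReal.ofReal (r ^ finrank ℝ (ℝ ∙ v)ᗮ) *
        μH[finrank ℝ (ℝ ∙ v)ᗮ] (closedBall (0 : (ℝ ∙ v)ᗮ) 1) := by
  set H := (ℝ ∙ v)ᗮ
  have hsub : H.starProjection '' levelSetPiece A r z v ⊆ closedBall (H.starProjection z) r := by
    rintro _ ⟨x, hx, rfl⟩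
    have := H.lipschitzWith_starProjection.dist_le_mul x z
    rw [NNReal.coe_one, one_mul] at this
    exact mem_closedBall.mpr (by linarith [hx.1])
  calc μH[finrank ℝ H] (levelSetPiece A r z v)
      ≤ ((3 : ℝ≥0) : ℝ≥0∞) ^ (finrank ℝ H : ℝ) *
          μH[finrank ℝ H] (H.starProjection '' levelSetPiece A r z v) :=
        hausdorffMeasure_le_of_dist_le_mul_dist (Nat.cast_nonneg _) fun x hx y hy ↦ by
          exact_mod_cast dist_le_three_mul_dist_starProjection_of_mem_levelSetPiece hr hv hx hy
    _ ≤ ((3 : ℝ≥0) : ℝ≥0∞) ^ (finrank ℝ H : ℝ) *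
          (ENNReal.ofReal (r ^ finrank ℝ H) * μH[finrank ℝ H] (closedBall (0 : H) 1)) := by
        gcongr
        exact H.hausdorffMeasure_le_of_subset_closedBall
          (image_subset_iff.mpr fun x _ ↦ H.starProjection_apply_mem x)
          (H.starProjection_apply_mem z) hr.le hsub
    _ = _ := by rw [ENNReal.rpow_natCast, mul_assoc]; rfl

variable (E) in
lemma exists_finset_unit_forall_inner_ge [FiniteDimensional ℝ E] :
    ∃ V : Finset E, (∀ v ∈ V, ‖v‖ = 1) ∧ ∀ u : E, ‖u‖ = 1 → ∃ v ∈ V, 7 / 8 ≤ ⟪v, u⟫ := by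
  obtain ⟨V, hVS, hVfin, hV⟩ := finite_cover_balls_of_compact (isCompact_sphere (0 : E) 1)
    (by norm_num : (0 : ℝ) < 1 / 2)
  refine ⟨hVfin.toFinset, fun v hv ↦ by simpa using hVS (hVfin.mem_toFinset.mp hv), fun u hu ↦ ?_⟩
  obtain ⟨v, hvV, huv⟩ := mem_iUnion₂.mp (hV (show u ∈ sphere (0 : E) 1 by simpa using hu))
  have hvn : ‖v‖ = 1 := by simpa using hVS hvV
  refine ⟨v, hVfin.mem_toFinset.mpr hvV, ?_⟩
  have := norm_sub_sq_real u v
  rw [hu, hvn, real_inner_comm] at this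
  nlinarith [mem_ball_iff_norm.mp huv, norm_nonneg (u - v)]

lemma infDist_levelSet_subset_iUnion_levelSetPiece (hA : IsCompact A) (hr : 0 < r)
    {M V : Finset E} (hM : {x | infDist x A = r} ⊆ ⋃ z ∈ M, closedBall z (r / 4))
    (hV : ∀ u : E, ‖u‖ = 1 → ∃ v ∈ V, 7 / 8 ≤ ⟪v, u⟫) :
    {x | infDist x A = r} ⊆ ⋃ z ∈ M, ⋃ v ∈ V, levelSetPiece A r z v := by
  intro x hx
  obtain ⟨a, ha, hxa⟩ := hA.exists_mem_dist_eq_of_infDist_eq hr hx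
  obtain ⟨z, hzM, hxz⟩ := mem_iUnion₂.mp (hM hx)
  have hu : ‖r⁻¹ • (x - a)‖ = 1 := by
    rw [norm_smul, ← dist_eq_norm, hxa, norm_inv, Real.norm_of_nonneg hr.le, inv_mul_cancel₀ hr.ne']
  obtain ⟨v, hvV, huv⟩ := hV _ hu
  refine mem_biUnion hzM (mem_biUnion hvV ⟨mem_closedBall.mp hxz, hx, a, ha, hxa, ?_⟩)
  rw [real_inner_smul_right] at huv
  calc 7 / 8 * r ≤ r⁻¹ * ⟪v, x - a⟫ * r := by gcongr
    _ = ⟪v, x - a⟫ := by field_simp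

lemma finrank_orthogonal_span_singleton_of_norm_eq_one [FiniteDimensional ℝ E] {m : ℕ}
    (hE : finrank ℝ E = m + 1) (hv : ‖v‖ = 1) : finrank ℝ (ℝ ∙ v)ᗮ = m :=
  have : Fact (finrank ℝ E = m + 1) := ⟨hE⟩
  Submodule.finrank_orthogonal_span_singleton (norm_ne_zero_iff.mp (by simp [hv]))

lemma hausdorffMeasure_infDist_levelSet_le [FiniteDimensional ℝ E] [MeasurableSpace E]
    [BorelSpace E] {m : ℕ} (hE : finrank ℝ E = m + 1) (hA : IsCompact A) (hr : 0 < r)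
    {M V : Finset E} (hM : {x | infDist x A = r} ⊆ ⋃ z ∈ M, closedBall z (r / 4))
    (hVunit : ∀ v ∈ V, ‖v‖ = 1) (hV : ∀ u : E, ‖u‖ = 1 → ∃ v ∈ V, 7 / 8 ≤ ⟪v, u⟫) :
    μH[m] {x | infDist x A = r} ≤
      M.card * ENNReal.ofReal (r ^ m) * (3 ^ m * ∑ v ∈ V, μH[m] (closedBall (0 : (ℝ ∙ v)ᗮ) 1)) :=
  calc μH[m] {x | infDist x A = r}
      ≤ ∑ z ∈ M, ∑ v ∈ V, μH[m] (levelSetPiece A r z v) :=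
        (measure_mono (infDist_levelSet_subset_iUnion_levelSetPiece hA hr hM hV)).trans
          ((measure_biUnion_finset_le _ _).trans
            (Finset.sum_le_sum fun z _ ↦ measure_biUnion_finset_le _ _))
    _ ≤ ∑ z ∈ M, ∑ v ∈ V,
          3 ^ m * ENNReal.ofReal (r ^ m) * μH[m] (closedBall (0 : (ℝ ∙ v)ᗮ) 1) := by
        gcongr with z _ v hv
        have := hausdorffMeasure_levelSetPiece_le (A := A) hr (hVunit v hv) z
        rwa [finrank_orthogonal_span_singleton_of_norm_eq_one hE (hVunit v hv)] at this
    _ = _ := by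
        simp only [Finset.sum_const, nsmul_eq_mul, ← Finset.mul_sum]
        ring

end Pieces

theorem exists_ofReal_mul_hausdorffMeasure_infDist_levelSet_le {E : Type*} [NormedAddCommGroup E]
    [InnerProductSpace ℝ E] [FiniteDimensional ℝ E] [MeasurableSpace E] [BorelSpace E]
    (μ : Measure E) [μ.IsAddHaarMeasure] {m : ℕ} (hE : finrank ℝ E = m + 1) {A : Set E}
    (hA : IsCompact A) :
    ∃ C : ℝ≥0∞, C ≠ ⊤ ∧ ∀ r : ℝ, 0 < r →
      ENNReal.ofReal r * μH[m] {x | infDist x A = r} ≤ C * μ (cthickening r A \ A) := by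
  obtain ⟨V, hVunit, hV⟩ := exists_finset_unit_forall_inner_ge E
  set β : ℝ≥0∞ := ∑ v ∈ V, μH[m] (closedBall (0 : (ℝ ∙ v)ᗮ) 1)
  have hβ : β ≠ ⊤ := ENNReal.sum_ne_top.mpr fun v hv ↦ by
    rw [← finrank_orthogonal_span_singleton_of_norm_eq_one hE (hVunit v hv)]
    exact measure_closedBall_lt_top.ne
  have hball : μ (ball 0 1) ≠ 0 := (measure_ball_pos μ 0 one_pos).ne'
  refine ⟨16 ^ (m + 1) * 3 ^ m * β / μ (ball 0 1), ENNReal.div_ne_top (by finiteness) hball,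
    fun r hr ↦ ?_⟩
  obtain ⟨M, hMS, hMsep, hMcov⟩ := hA.exists_finset_isSeparated_cover_infDist_levelSet hr
  have hpack := card_mul_measure_ball_le_measure_cthickening_diff μ hA hr hMS hMsep
  rw [Measure.addHaar_ball_of_pos μ 0 (by positivity), hE] at hpack
  have hscale : ENNReal.ofReal r * ENNReal.ofReal (r ^ m) =
      16 ^ (m + 1) * ENNReal.ofReal ((r / 16) ^ (m + 1)) := by
    rw [← ENNReal.ofReal_mul hr.le, ← ENNReal.ofReal_ofNat 16, ← ENNReal.ofReal_pow (by norm_num),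
      ← ENNReal.ofReal_mul (by positivity), ← mul_pow, ← pow_succ']
    ring_nf
  calc ENNReal.ofReal r * μH[m] {x | infDist x A = r}
      ≤ ENNReal.ofReal r * (M.card * ENNReal.ofReal (r ^ m) * (3 ^ m * β)) := by
        gcongr
        exact hausdorffMeasure_infDist_levelSet_le hE hA hr hMcov hVunit hV
    _ = 3 ^ m * β * M.card * (ENNReal.ofReal r * ENNReal.ofReal (r ^ m)) := by ring
    _ = 16 ^ (m + 1) * 3 ^ m * β * (M.card * ENNReal.ofReal ((r / 16) ^ (m + 1))) := by
        rw [hscale]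
        ring
    _ ≤ 16 ^ (m + 1) * 3 ^ m * β * (μ (cthickening r A \ A) / μ (ball 0 1)) := by
        gcongr
        rwa [ENNReal.le_div_iff_mul_le (Or.inl hball) (Or.inl measure_ball_lt_top.ne), mul_assoc]
    _ = 16 ^ (m + 1) * 3 ^ m * β / μ (ball 0 1) * μ (cthickening r A \ A) := by
        simp only [div_eq_mul_inv]
        ring

lemma IsCompact.tendsto_measure_cthickening_diff {X : Type*} [MetricSpace X] [MeasurableSpace X]
    [OpensMeasurableSpace X] [ProperSpace X] (μ : Measure X) [IsFiniteMeasureOnCompacts μ]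
    {A : Set X} (hA : IsCompact A) :
    Tendsto (fun r ↦ μ (cthickening r A \ A)) (𝓝 0) (𝓝 0) := by
  have hA' : μ A ≠ ⊤ := hA.measure_lt_top.ne
  have := ENNReal.Tendsto.sub (tendsto_measure_cthickening_of_isCompact (μ := μ) hA)
    tendsto_const_nhds (Or.inr hA')
  rw [tsub_self] at this
  refine this.congr fun r ↦ ?_
  rw [measure_sdiff (self_subset_cthickening A) hA.measurableSet.nullMeasurableSet hA']

theorem stmt_7 (d : ℕ) (A : Set (EuclideanSpace ℝ (Fin d))) (hA : IsCompact A) :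
    Filter.Tendsto
      (fun r : ℝ => ENNReal.ofReal r * μH[(d : ℝ) - 1] (frontier (Metric.cthickening r A)))
      (𝓝[>] 0) (𝓝 0) := by
  obtain _ | m := d
  · simp
  obtain ⟨C, hC, hbound⟩ :=
    exists_ofReal_mul_hausdorffMeasure_infDist_levelSet_le volume (finrank_euclideanSpace_fin) hA
  have hvanish := (hA.tendsto_measure_cthickening_diff volume).mono_left
    (nhdsWithin_le_nhds (s := Ioi 0))
  refine tendsto_of_tendsto_of_tendsto_of_le_of_le' tendsto_const_nhds
    (by simpa using ENNReal.Tendsto.const_mul hvanish (Or.inr hC))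
    (Eventually.of_forall fun _ ↦ zero_le) ?_
  filter_upwards [self_mem_nhdsWithin] with r (hr : 0 < r)
  rw [show ((m + 1 : ℕ) : ℝ) - 1 = m by push_cast; ring]
  exact (mul_le_mul_right (measure_mono (frontier_cthickening_subset_infDist_levelSet A hr.le))
    _).trans (hbound r hr)
end

section
/- Let A ⊂ ℝ^d be compact and 0 < r₀ < r. Then the left derivative of the parallel volume satisfies (V_A)'_−(r) ≤ (r/r₀)^{d−1} (V_A)'_−(r₀). -/
/-!
Kneser's argument. For `l ≥ 1`, move each point `x` toward a nearest point `p x` of `A`, keeping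
the fraction `l⁻¹` of its distance. Since nearest-point maps are monotone
(`⟪p x - p y, x - y⟫ ≥ 0`), this map shrinks distances by at most the factor `l⁻¹`, and it sends
the shell `A_{l b} \ A_{l a}` into `A_b \ A_a`. Its inverse is therefore `l`-Lipschitz on the
image, which gives `V(l b) - V(l a) ≤ l^d (V b - V a)`. With `b = r₀` and `l = r / r₀`, the function
`a ↦ l^d V a - V (l a)` is maximal at `r₀` among `a ∈ [0, r₀]`, so its left derivative
`l^d V'₋(r₀) - l V'₋(r)` at `r₀` is nonnegative.
-/

open MeasureTheory Metric Filter Set Module Function AffineMap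
open scoped Topology ENNReal NNReal RealInnerProductSpace

theorem mem_cthickening_iff_infDist_le {X : Type*} [PseudoMetricSpace X] {s : Set X}
    (hs : s.Nonempty) {δ : ℝ} (hδ : 0 ≤ δ) {x : X} : x ∈ cthickening δ s ↔ infDist x s ≤ δ := by
  rw [mem_cthickening_iff, infDist, ← ENNReal.le_ofReal_iff_toReal_le (infEDist_ne_top hs) hδ]

section InnerProductSpace

variable {E : Type*} [NormedAddCommGroup E] [InnerProductSpace ℝ E]

theorem real_inner_sub_sub_nonneg_of_dist_le {p q x y : E} (hx : dist x p ≤ dist x q)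
    (hy : dist y q ≤ dist y p) : 0 ≤ ⟪p - q, x - y⟫ := by
  have hx' : ‖x - p‖ ^ 2 ≤ ‖x - q‖ ^ 2 := by
    simpa only [dist_eq_norm] using pow_le_pow_left₀ dist_nonneg hx 2
  have hy' : ‖y - q‖ ^ 2 ≤ ‖y - p‖ ^ 2 := by
    simpa only [dist_eq_norm] using pow_le_pow_left₀ dist_nonneg hy 2
  have polar : 2 * ⟪p - q, x - y⟫
      = ‖x - q‖ ^ 2 - ‖x - p‖ ^ 2 + (‖y - p‖ ^ 2 - ‖y - q‖ ^ 2) := by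
    simp only [norm_sub_sq_real, inner_sub_left, inner_sub_right, real_inner_comm p,
      real_inner_comm q]
    ring
  linarith

theorem mul_norm_sub_le_norm_lineMap_sub_lineMap {p q x y : E} (h : 0 ≤ ⟪p - q, x - y⟫)
    {c : ℝ} (hc₀ : 0 ≤ c) (hc₁ : c ≤ 1) :
    c * ‖x - y‖ ≤ ‖lineMap p x c - lineMap q y c‖ := by
  have hsplit : lineMap p x c - lineMap q y c = (1 - c) • (p - q) + c • (x - y) := by
    simp only [lineMap_apply_module, smul_sub]
    abel
  have hsq : ‖(1 - c) • (p - q) + c • (x - y)‖ ^ 2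
      = (1 - c) ^ 2 * ‖p - q‖ ^ 2 + 2 * ((1 - c) * c) * ⟪p - q, x - y⟫ + c ^ 2 * ‖x - y‖ ^ 2 := by
    rw [norm_add_sq_real, real_inner_smul_left, real_inner_smul_right, norm_smul, norm_smul,
      Real.norm_of_nonneg hc₀, Real.norm_of_nonneg (sub_nonneg.2 hc₁)]
    ring
  rw [hsplit]
  refine (pow_le_pow_iff_left₀ (by positivity) (norm_nonneg _) two_ne_zero).1 ?_
  rw [hsq]
  nlinarith [mul_nonneg (mul_nonneg (sub_nonneg.2 hc₁) hc₀) h, sq_nonneg ((1 - c) * ‖p - q‖)]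

theorem IsCompact.exists_infDist_eq_mul_and_mul_dist_le {A : Set E} (hA : IsCompact A)
    (hne : A.Nonempty) {c : ℝ} (hc₀ : 0 ≤ c) (hc₁ : c ≤ 1) :
    ∃ Φ : E → E, (∀ x, infDist (Φ x) A = c * infDist x A) ∧
      ∀ x y, c * dist x y ≤ dist (Φ x) (Φ y) := by
  choose p hpA hpx using fun x => hA.exists_infDist_eq_dist hne x
  refine ⟨fun x => lineMap (p x) x c, fun x => le_antisymm ?_ ?_, fun x y => ?_⟩
  · calc infDist (lineMap (p x) x c) A ≤ dist (lineMap (p x) x c) (p x) :=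
          infDist_le_dist_of_mem (hpA x)
      _ = c * infDist x A := by rw [dist_lineMap_left, Real.norm_of_nonneg hc₀, hpx, dist_comm]
  · have := infDist_le_infDist_add_dist (x := x) (y := lineMap (p x) x c) (s := A)
    rw [dist_comm, dist_lineMap_right, Real.norm_of_nonneg (sub_nonneg.2 hc₁), dist_comm, ← hpx]
      at this
    linarith
  · have hmono := real_inner_sub_sub_nonneg_of_dist_le
      ((hpx x).symm.trans_le (infDist_le_dist_of_mem (hpA y)))
      ((hpx y).symm.trans_le (infDist_le_dist_of_mem (hpA x)))
    simpa only [dist_eq_norm] using mul_norm_sub_le_norm_lineMap_sub_lineMap hmono hc₀ hc₁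

end InnerProductSpace

section AddHaar

variable {E : Type*} [NormedAddCommGroup E] [NormedSpace ℝ E] [FiniteDimensional ℝ E]
  [MeasurableSpace E] [BorelSpace E] (μ : Measure E) [μ.IsAddHaarMeasure]

theorem LipschitzOnWith.addHaar_image_le {K : ℝ≥0} {f : E → E} {s : Set E}
    (hf : LipschitzOnWith K f s) : μ (f '' s) ≤ (K : ℝ≥0∞) ^ finrank ℝ E * μ s := by
  have hμ := Measure.isAddLeftInvariant_eq_smul μ μH[finrank ℝ E]
  set c := Measure.addHaarScalarFactor μ μH[finrank ℝ E]
  calc μ (f '' s) = c * μH[finrank ℝ E] (f '' s) := by rw [hμ]; rfl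
    _ ≤ c * ((K : ℝ≥0∞) ^ finrank ℝ E * μH[finrank ℝ E] s) := by
      gcongr
      simpa only [ENNReal.rpow_natCast] using hf.hausdorffMeasure_image_le (Nat.cast_nonneg _)
    _ = (K : ℝ≥0∞) ^ finrank ℝ E * (c * μH[finrank ℝ E] s) := by ring
    _ = (K : ℝ≥0∞) ^ finrank ℝ E * μ s := by rw [hμ]; rfl

theorem addHaar_le_of_dist_le_mul_of_mapsTo {K : ℝ≥0} {Φ : E → E} {s t : Set E}
    (hΦ : ∀ x ∈ s, ∀ y ∈ s, dist x y ≤ K * dist (Φ x) (Φ y)) (hst : MapsTo Φ s t) :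
    μ s ≤ (K : ℝ≥0∞) ^ finrank ℝ E * μ t := by
  have hinj : InjOn Φ s := fun x hx y hy hxy ↦
    dist_le_zero.1 <| by simpa only [hxy, dist_self, mul_zero] using hΦ x hx y hy
  have hinv : LeftInvOn (invFunOn Φ s) Φ s := hinj.leftInvOn_invFunOn
  have hlip : LipschitzOnWith K (invFunOn Φ s) (Φ '' s) := by
    refine LipschitzOnWith.of_dist_le_mul ?_
    rintro _ ⟨x, hx, rfl⟩ _ ⟨y, hy, rfl⟩
    rw [hinv hx, hinv hy]
    exact hΦ x hx y hy
  calc μ s = μ (invFunOn Φ s '' (Φ '' s)) := by rw [hinv.image_image]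
    _ ≤ (K : ℝ≥0∞) ^ finrank ℝ E * μ (Φ '' s) := hlip.addHaar_image_le μ
    _ ≤ (K : ℝ≥0∞) ^ finrank ℝ E * μ t := by gcongr; exact hst.image_subset

end AddHaar

section Kneser

variable {E : Type*} [NormedAddCommGroup E] [InnerProductSpace ℝ E] [FiniteDimensional ℝ E]
  [MeasurableSpace E] [BorelSpace E] (μ : Measure E) [μ.IsAddHaarMeasure]

theorem addHaar_cthickening_diff_le {A : Set E} (hA : IsCompact A) {a b l : ℝ} (ha : 0 ≤ a)
    (hl : 1 ≤ l) :
    μ (cthickening (l * b) A \ cthickening (l * a) A)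
      ≤ ENNReal.ofReal l ^ finrank ℝ E * μ (cthickening b A \ cthickening a A) := by
  rcases A.eq_empty_or_nonempty with rfl | hne
  · simp
  rcases lt_or_ge b a with hba | hab
  · rw [sdiff_eq_empty.2 (cthickening_mono (by nlinarith) A), measure_empty]
    exact zero_le
  have hl₀ : 0 < l := one_pos.trans_le hl
  obtain ⟨Φ, hΦA, hΦ⟩ := hA.exists_infDist_eq_mul_and_mul_dist_le hne (inv_nonneg.2 hl₀.le)
    (inv_le_one_of_one_le₀ hl)
  have hmem {δ : ℝ} (hδ : 0 ≤ δ) (x : E) : Φ x ∈ cthickening δ A ↔ x ∈ cthickening (l * δ) A := by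
    rw [mem_cthickening_iff_infDist_le hne hδ, mem_cthickening_iff_infDist_le hne (by positivity),
      hΦA, inv_mul_le_iff₀ hl₀]
  refine addHaar_le_of_dist_le_mul_of_mapsTo μ (K := l.toNNReal) (fun x _ y _ ↦ ?_)
    fun x ⟨hxb, hxa⟩ ↦ ⟨(hmem (ha.trans hab) x).2 hxb, fun h ↦ hxa ((hmem ha x).1 h)⟩
  rw [Real.coe_toNNReal _ hl₀.le, ← inv_mul_le_iff₀ hl₀]
  exact hΦ x y

theorem addHaar_real_cthickening_sub_le {A : Set E} (hA : IsCompact A) {a b l : ℝ} (ha : 0 ≤ a)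
    (hab : a ≤ b) (hl : 1 ≤ l) :
    μ.real (cthickening (l * b) A) - μ.real (cthickening (l * a) A)
      ≤ l ^ finrank ℝ E * (μ.real (cthickening b A) - μ.real (cthickening a A)) := by
  have hfin (δ : ℝ) : μ (cthickening δ A) ≠ ∞ := hA.cthickening.measure_lt_top.ne
  have hshell {s t : ℝ} (hst : s ≤ t) :
      μ.real (cthickening t A \ cthickening s A)
        = μ.real (cthickening t A) - μ.real (cthickening s A) :=
    measureReal_sdiff (cthickening_mono hst A) isClosed_cthickening.measurableSet (hfin t)
  have hl₀ : 0 ≤ l := zero_le_one.trans hl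
  have h := ENNReal.toReal_mono
    (ENNReal.mul_ne_top (ENNReal.pow_ne_top ENNReal.ofReal_ne_top)
      (measure_ne_top_of_subset sdiff_subset (hfin b)))
    (addHaar_cthickening_diff_le μ hA (b := b) ha hl)
  rw [ENNReal.toReal_mul, ENNReal.toReal_pow, ENNReal.toReal_ofReal hl₀] at h
  rwa [← hshell (mul_le_mul_of_nonneg_left hab hl₀), ← hshell hab]

end Kneser

theorem IsLocalMaxOn.hasDerivWithinAt_Iio_nonneg {f : ℝ → ℝ} {f' a : ℝ}
    (hmax : IsLocalMaxOn f (Iio a) a) (hf : HasDerivWithinAt f f' (Iio a) a) : 0 ≤ f' := by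
  have hcone : (-1 : ℝ) ∈ posTangentConeAt (Iio a) a :=
    mem_posTangentConeAt_of_frequently_mem <| Eventually.frequently <|
      eventually_mem_nhdsWithin.mono fun t (ht : 0 < t) ↦ by simpa using ht
  simpa using hmax.hasFDerivWithinAt_nonpos hf.hasFDerivWithinAt hcone

theorem le_rpow_mul_of_hasDerivWithinAt_Iio {V : ℝ → ℝ} {n : ℕ}
    (hV : ∀ a b l : ℝ, 0 ≤ a → a ≤ b → 1 ≤ l → V (l * b) - V (l * a) ≤ l ^ n * (V b - V a))
    {r₀ r L L₀ : ℝ} (h₀ : 0 < r₀) (h₀r : r₀ < r) (hL : HasDerivWithinAt V L (Iio r) r)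
    (hL₀ : HasDerivWithinAt V L₀ (Iio r₀) r₀) : L ≤ (r / r₀) ^ ((n : ℝ) - 1) * L₀ := by
  set l := r / r₀
  have hl : 1 < l := (one_lt_div h₀).2 h₀r
  have hlr₀ : l * r₀ = r := div_mul_cancel₀ r h₀.ne'
  have hW : HasDerivWithinAt (fun a ↦ l ^ n * V a - V (l * a)) (l ^ n * L₀ - L * (l * 1))
      (Iio r₀) r₀ :=
    (hL₀.const_mul _).sub <| hL.comp_of_eq r₀ ((hasDerivAt_id' r₀).const_mul l).hasDerivWithinAt
      (fun a (ha : a < r₀) ↦ by rw [← hlr₀]; exact mul_lt_mul_of_pos_left ha (by positivity))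
      (by simp [hlr₀])
  have hmax : IsLocalMaxOn (fun a ↦ l ^ n * V a - V (l * a)) (Iio r₀) r₀ := by
    filter_upwards [inter_mem_nhdsWithin (Iio r₀) (Ioi_mem_nhds h₀)] with a ⟨har, ha⟩
    have := hV a r₀ l ha.le har.le hl.le
    simp only [hlr₀] at this ⊢
    linarith
  have := hmax.hasDerivWithinAt_Iio_nonneg hW
  rw [Real.rpow_sub (by positivity), Real.rpow_one, Real.rpow_natCast, div_mul_eq_mul_div,
    le_div_iff₀ (by positivity)]
  linarith

theorem stmt_11 (d : ℕ) (A : Set (EuclideanSpace ℝ (Fin d))) (hA : IsCompact A)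
    (r₀ r : ℝ) (h₀ : 0 < r₀) (h₀r : r₀ < r) (L L₀ : ℝ)
    (hL : HasDerivWithinAt (fun s : ℝ => (volume (Metric.cthickening s A)).toReal)
      L (Set.Iio r) r)
    (hL₀ : HasDerivWithinAt (fun s : ℝ => (volume (Metric.cthickening s A)).toReal)
      L₀ (Set.Iio r₀) r₀) :
    L ≤ (r / r₀) ^ ((d : ℝ) - 1) * L₀ := by
  refine le_rpow_mul_of_hasDerivWithinAt_Iio (fun a b l ha hab hl ↦ ?_) h₀ h₀r hL hL₀
  simpa only [finrank_euclideanSpace_fin, Measure.real] using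
    addHaar_real_cthickening_sub_le volume hA ha hab hl
end

section
/- Let Z be a random compact set in ℝ^d such that E[V_Z(r₀)] < ∞ for some r₀ > 0. Then E[(V_Z)'_−(r)] < ∞ for all 0 < r. -/
/-!
Write `V(t)` for the volume of the `t`-parallel set of a compact set `Z` in dimension `n`. For
`0 < s ≤ r`, moving every point towards a nearest point of `Z` by the factor `s / r` maps the
`r`-parallel set into the `s`-parallel set and shrinks distances by at most that factor, so
`V(r) ≤ (r / s)^n V(s)`. Hence `V` lies above `s ↦ V(r) (s / r)^n` to the left of `r`, with
equality at `r`, which bounds the left derivative at `r` by `n V(r) / r ≤ C(r, r₀) V(r₀)`.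
Integrating this pointwise bound over `ω` gives the claim.
-/

open MeasureTheory Measure Metric Filter Set TopologicalSpace Module
open scoped Topology ENNReal NNReal

theorem AntilipschitzWith.addHaar_le_mul_addHaar_image {E : Type*} [NormedAddCommGroup E]
    [NormedSpace ℝ E] [FiniteDimensional ℝ E] [MeasurableSpace E] [BorelSpace E]
    (μ : Measure E) [μ.IsAddHaarMeasure] {K : ℝ≥0} {f : E → E} (hf : AntilipschitzWith K f)
    (s : Set E) : μ s ≤ (K : ℝ≥0∞) ^ finrank ℝ E * μ (f '' s) := by
  have hH := hf.le_hausdorffMeasure_image (d := finrank ℝ E) (Nat.cast_nonneg _) s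
  rw [ENNReal.rpow_natCast] at hH
  rw [isAddLeftInvariant_eq_smul μ μH[finrank ℝ E]]
  simp only [Measure.smul_apply, ENNReal.smul_def, smul_eq_mul]
  rw [mul_left_comm]
  gcongr

theorem HasDerivWithinAt.le_of_eventually_le_of_eq_Iio {f g : ℝ → ℝ} {f' g' r : ℝ}
    (hf : HasDerivWithinAt f f' (Iio r) r) (hg : HasDerivWithinAt g g' (Iio r) r)
    (hle : ∀ᶠ s in 𝓝[<] r, g s ≤ f s) (heq : f r = g r) : f' ≤ g' := by
  rw [hasDerivWithinAt_iff_tendsto_slope' (notMem_Iio.2 le_rfl)] at hf hg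
  refine le_of_tendsto_of_tendsto hf hg ?_
  filter_upwards [hle, self_mem_nhdsWithin] with s hs (hsr : s < r)
  rw [slope_def_field, slope_def_field, heq]
  exact div_le_div_of_nonpos_of_le (sub_nonpos.2 hsr.le) (by linarith)

section NearestPoint

variable {E : Type*} [NormedAddCommGroup E] [InnerProductSpace ℝ E]

theorem neg_norm_sq_le_inner_of_nearest {x y p q : E} (hp : dist x p ≤ dist x q)
    (hq : dist y q ≤ dist y p) : -‖p - q‖ ^ 2 ≤ inner ℝ (p - q) ((x - p) - (y - q)) := by
  rw [dist_eq_norm, dist_eq_norm] at hp hq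
  have hx : ‖x - q‖ ^ 2 = ‖x - p‖ ^ 2 + 2 * inner ℝ (p - q) (x - p) + ‖p - q‖ ^ 2 := by
    rw [show x - q = (x - p) + (p - q) by abel, norm_add_sq_real, real_inner_comm]
  have hy : ‖y - p‖ ^ 2 = ‖y - q‖ ^ 2 - 2 * inner ℝ (p - q) (y - q) + ‖p - q‖ ^ 2 := by
    rw [show y - p = (y - q) - (p - q) by abel, norm_sub_sq_real, real_inner_comm]
  have := pow_le_pow_left₀ (norm_nonneg _) hp 2
  have := pow_le_pow_left₀ (norm_nonneg _) hq 2
  rw [inner_sub_right]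
  linarith

theorem mul_norm_add_le_norm_add_smul {c w : E} {l : ℝ} (hl0 : 0 ≤ l) (hl1 : l ≤ 1)
    (h : -‖c‖ ^ 2 ≤ inner ℝ c w) : l * ‖c + w‖ ≤ ‖c + l • w‖ := by
  refine (pow_le_pow_iff_left₀ (by positivity) (norm_nonneg _) two_ne_zero).1 ?_
  rw [mul_pow, norm_add_sq_real, norm_add_sq_real, inner_smul_right, norm_smul,
    Real.norm_of_nonneg hl0]
  -- the difference of the two sides is `(1 - l)²‖c‖² + 2l(1 - l)(⟪c, w⟫ + ‖c‖²)`
  nlinarith [mul_nonneg (mul_nonneg hl0 (sub_nonneg.2 hl1)) (neg_le_iff_add_nonneg.1 h),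
    mul_nonneg (sq_nonneg (1 - l)) (sq_nonneg ‖c‖)]

theorem mul_dist_le_dist_of_nearest {x y p q : E} {l : ℝ} (hl0 : 0 ≤ l) (hl1 : l ≤ 1)
    (hp : dist x p ≤ dist x q) (hq : dist y q ≤ dist y p) :
    l * dist x y ≤ dist (p + l • (x - p)) (q + l • (y - q)) := by
  have := mul_norm_add_le_norm_add_smul hl0 hl1 (neg_norm_sq_le_inner_of_nearest hp hq)
  rwa [dist_eq_norm, dist_eq_norm, show x - y = (p - q) + ((x - p) - (y - q)) by abel,
    show p + l • (x - p) - (q + l • (y - q)) = (p - q) + l • ((x - p) - (y - q)) by module]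

end NearestPoint

section ParallelSet

variable {E : Type*} [NormedAddCommGroup E] [InnerProductSpace ℝ E] [FiniteDimensional ℝ E]
  [MeasurableSpace E] [BorelSpace E] (μ : Measure E) [μ.IsAddHaarMeasure]

theorem addHaar_cthickening_le_div_pow_mul {Z : Set E} (hZ : IsClosed Z) {s r : ℝ} (hs : 0 < s)
    (hsr : s ≤ r) :
    μ (cthickening r Z) ≤ ENNReal.ofReal ((r / s) ^ finrank ℝ E) * μ (cthickening s Z) := by
  rcases Z.eq_empty_or_nonempty with rfl | hne
  · simp
  have hr : 0 < r := hs.trans_le hsr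
  choose p hpZ hpd using hZ.exists_infDist_eq_dist hne
  have hnearest : ∀ x y, dist x (p x) ≤ dist x (p y) := fun x y =>
    hpd x ▸ infDist_le_dist_of_mem (hpZ y)
  set Φ : E → E := fun x => p x + (s / r) • (x - p x)
  have hΦ : AntilipschitzWith (r / s).toNNReal Φ := by
    refine AntilipschitzWith.of_le_mul_dist fun x y => ?_
    have := mul_dist_le_dist_of_nearest (by positivity) ((div_le_one hr).2 hsr)
      (hnearest x y) (hnearest y x)
    rw [Real.coe_toNNReal _ (by positivity)]
    calc dist x y = r / s * (s / r * dist x y) := by field_simp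
      _ ≤ r / s * dist (Φ x) (Φ y) := by gcongr
  have hmaps : Φ '' cthickening r Z ⊆ cthickening s Z := by
    rintro _ ⟨x, hx, rfl⟩
    refine mem_cthickening_of_dist_le _ (p x) s Z (hpZ x) ?_
    have hxr : infDist x Z ≤ r := ENNReal.toReal_le_of_le_ofReal hr.le (mem_cthickening_iff.1 hx)
    calc dist (Φ x) (p x) = s / r * infDist x Z := by
          rw [dist_eq_norm, add_sub_cancel_left, norm_smul, Real.norm_of_nonneg (by positivity),
            ← dist_eq_norm, hpd]
      _ ≤ s / r * r := by gcongr
      _ = s := div_mul_cancel₀ s hr.ne'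
  calc μ (cthickening r Z)
      ≤ ENNReal.ofReal (r / s) ^ finrank ℝ E * μ (Φ '' cthickening r Z) :=
        hΦ.addHaar_le_mul_addHaar_image μ _
    _ ≤ ENNReal.ofReal ((r / s) ^ finrank ℝ E) * μ (cthickening s Z) := by
        rw [ENNReal.ofReal_pow (by positivity)]
        gcongr

theorem addHaar_cthickening_le_max_pow_mul {Z : Set E} (hZ : IsClosed Z) {s : ℝ} (hs : 0 < s)
    (r : ℝ) :
    μ (cthickening r Z) ≤ ENNReal.ofReal (max 1 (r / s) ^ finrank ℝ E) * μ (cthickening s Z) := by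
  rcases le_total r s with hrs | hsr
  · refine (measure_mono (cthickening_mono hrs Z)).trans (le_mul_of_one_le_left' ?_)
    exact ENNReal.one_le_ofReal.2 (one_le_pow₀ (le_max_left _ _))
  · refine (addHaar_cthickening_le_div_pow_mul μ hZ hs hsr).trans ?_
    gcongr
    · exact div_nonneg (hs.trans_le hsr).le hs.le
    · exact le_max_right _ _

theorem derivWithin_addHaar_cthickening_le {Z : Set E} (hZ : IsCompact Z) {r : ℝ} (hr : 0 < r) :
    derivWithin (fun s => (μ (cthickening s Z)).toReal) (Iio r) r
      ≤ (μ (cthickening r Z)).toReal * (finrank ℝ E / r) := by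
  set V := fun s => (μ (cthickening s Z)).toReal
  set n := finrank ℝ E
  by_cases hV : DifferentiableWithinAt ℝ V (Iio r) r
  swap
  · rw [derivWithin_zero_of_not_differentiableWithinAt hV]
    positivity
  have hg : HasDerivAt (fun s => V r * (s / r) ^ n) (V r * (n / r)) r := by
    simpa [hr.ne', div_eq_mul_inv] using (((hasDerivAt_id r).div_const r).pow n).const_mul (V r)
  refine hV.hasDerivWithinAt.le_of_eventually_le_of_eq_Iio hg.hasDerivWithinAt ?_
    (by simp [hr.ne'])
  filter_upwards [Ioo_mem_nhdsLT hr] with s ⟨hs, hsr⟩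
  have hscale : V r ≤ (r / s) ^ n * V s := by
    have := ENNReal.toReal_mono (ENNReal.mul_ne_top ENNReal.ofReal_ne_top
      hZ.cthickening.measure_lt_top.ne) (addHaar_cthickening_le_div_pow_mul μ hZ.isClosed hs hsr.le)
    rwa [ENNReal.toReal_mul, ENNReal.toReal_ofReal (by positivity)] at this
  calc V r * (s / r) ^ n ≤ (r / s) ^ n * V s * (s / r) ^ n := by gcongr
    _ = V s := by
      rw [mul_right_comm, ← mul_pow, div_mul_div_comm, mul_comm r s, div_self (by positivity),
        one_pow, one_mul]

theorem ofReal_derivWithin_addHaar_cthickening_le {Z : Set E} (hZ : IsCompact Z) {r r₀ : ℝ}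
    (hr : 0 < r) (hr₀ : 0 < r₀) :
    ENNReal.ofReal (derivWithin (fun s => (μ (cthickening s Z)).toReal) (Iio r) r)
      ≤ ENNReal.ofReal (finrank ℝ E / r * max 1 (r / r₀) ^ finrank ℝ E)
        * μ (cthickening r₀ Z) := by
  calc ENNReal.ofReal (derivWithin (fun s => (μ (cthickening s Z)).toReal) (Iio r) r)
      ≤ ENNReal.ofReal ((μ (cthickening r Z)).toReal * (finrank ℝ E / r)) :=
        ENNReal.ofReal_le_ofReal (derivWithin_addHaar_cthickening_le μ hZ hr)
    _ ≤ μ (cthickening r Z) * ENNReal.ofReal (finrank ℝ E / r) := by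
        rw [ENNReal.ofReal_mul ENNReal.toReal_nonneg]
        gcongr
        exact ENNReal.ofReal_toReal_le
    _ ≤ ENNReal.ofReal (max 1 (r / r₀) ^ finrank ℝ E) * μ (cthickening r₀ Z)
          * ENNReal.ofReal (finrank ℝ E / r) := by
        gcongr
        exact addHaar_cthickening_le_max_pow_mul μ hZ.isClosed hr₀ r
    _ = _ := by
        rw [ENNReal.ofReal_mul (by positivity)]
        ring

end ParallelSet

theorem stmt_17_general (d : ℕ) (Ω : Type*) [MeasureSpace Ω]
    (Z : Ω → NonemptyCompacts (EuclideanSpace ℝ (Fin d)))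
    (r₀ : ℝ) (hr₀ : 0 < r₀)
    (hint : ∫⁻ ω, volume (Metric.cthickening r₀ (Z ω : Set (EuclideanSpace ℝ (Fin d))))
      ∂(volume : Measure Ω) < ⊤) :
    ∀ r : ℝ, 0 < r →
      ∫⁻ ω, ENNReal.ofReal
          (derivWithin
            (fun s : ℝ => (volume (Metric.cthickening s (Z ω : Set (EuclideanSpace ℝ (Fin d))))).toReal)
            (Set.Iio r) r)
        ∂(volume : Measure Ω) < ⊤ := by
  intro r hr
  set C := ENNReal.ofReal (d / r * max 1 (r / r₀) ^ d)
  have hbound : ∀ ω, ENNReal.ofReal (derivWithin (fun s : ℝ =>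
      (volume (cthickening s (Z ω : Set (EuclideanSpace ℝ (Fin d))))).toReal) (Iio r) r)
      ≤ C * volume (cthickening r₀ (Z ω : Set (EuclideanSpace ℝ (Fin d)))) := fun ω => by
    have := ofReal_derivWithin_addHaar_cthickening_le volume (Z ω).isCompact hr hr₀
    rwa [finrank_euclideanSpace_fin] at this
  calc _ ≤ ∫⁻ ω, C * volume (cthickening r₀ (Z ω : Set (EuclideanSpace ℝ (Fin d)))) :=
        lintegral_mono hbound
    _ = C * ∫⁻ ω, volume (cthickening r₀ (Z ω : Set (EuclideanSpace ℝ (Fin d)))) :=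
        lintegral_const_mul' C _ ENNReal.ofReal_ne_top
    _ < ⊤ := ENNReal.mul_lt_top ENNReal.ofReal_lt_top hint

theorem stmt_17 (d : ℕ) (Ω : Type*) [MeasureSpace Ω]
    [IsProbabilityMeasure (volume : Measure Ω)]
    [MeasurableSpace (NonemptyCompacts (EuclideanSpace ℝ (Fin d)))]
    [BorelSpace (NonemptyCompacts (EuclideanSpace ℝ (Fin d)))]
    (Z : Ω → NonemptyCompacts (EuclideanSpace ℝ (Fin d))) (hZ : Measurable Z)
    (r₀ : ℝ) (hr₀ : 0 < r₀)
    (hint : ∫⁻ ω, volume (Metric.cthickening r₀ (Z ω : Set (EuclideanSpace ℝ (Fin d))))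
      ∂(volume : Measure Ω) < ⊤) :
    ∀ r : ℝ, 0 < r →
      ∫⁻ ω, ENNReal.ofReal
          (derivWithin
            (fun s : ℝ => (volume (Metric.cthickening s (Z ω : Set (EuclideanSpace ℝ (Fin d))))).toReal)
            (Set.Iio r) r)
        ∂(volume : Measure Ω) < ⊤ :=
  stmt_17_general d Ω Z r₀ hr₀ hint
end

section
/- Let Z be a random compact planar set such that |log r| · H²(Z_r) → π almost surely as r → 0 (as holds for the Brownian path on [0,1] in ℝ²). Then almost surely limsup_{r→0} r |log r| H¹(∂Z_r) ≤ 2π. -/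
/-!
Every point `x` of `∂Z_r` is at distance exactly `r` from `Z`, and a nearest point `z ∈ Z` of `x`
is at distance at least `r` from every other point of `∂Z_r`. Hence two nearby points of `∂Z_r`
whose normals `x - z` point roughly in the same direction `e` are separated by the linear form
`ω(e, ·)`, so each such piece of `∂Z_r` inside a disc of radius `r/10` is the graph of a
Lipschitz function over a segment and has length `O(r)`; four directions `e` suffice. Covering
`∂Z_r` by the discs of radius `r/10` around a maximal `r/10`-separated set `N ⊆ ∂Z_r`,
`H¹(∂Z_r) ≲ r · #N`, while the discs of radius `r/20` around `N` are disjoint and lie in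
`Z_{2r} \ Z_{r/2}`, so `r² · #N ≲ H²(Z_{2r}) - H²(Z_{r/2})`. Therefore
`r |log r| H¹(∂Z_r) ≲ |log r| H²(Z_{2r}) - |log r| H²(Z_{r/2}) → π - π = 0`.
-/

open MeasureTheory Metric Filter Set TopologicalSpace
open scoped Topology ENNReal NNReal RealInnerProductSpace

lemma IsCompact.exists_finset_isSeparated_isCover {X : Type*} [PseudoMetricSpace X] {s : Set X}
    (hs : IsCompact s) {ε : ℝ≥0} (hε : ε ≠ 0) :
    ∃ N : Finset X, ↑N ⊆ s ∧ IsSeparated ε (N : Set X) ∧ IsCover ε s N := by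
  have hpack : packingNumber ε s ≠ ⊤ := by
    obtain ⟨C, -, hC, hcov⟩ := exists_finite_isCover_of_isCompact (ε := ε / 2) (by simpa) hs
    refine ne_top_of_le_ne_top hC.encard_lt_top.ne ?_
    calc packingNumber ε s = packingNumber (2 * (ε / 2)) s := by congr 1; ring
      _ ≤ externalCoveringNumber (ε / 2) s := packingNumber_two_mul_le_externalCoveringNumber _ _
      _ ≤ C.encard := hcov.externalCoveringNumber_le_encard
  have hfin : (maximalSeparatedSet ε s).Finite := by
    rw [← Set.encard_ne_top_iff, encard_maximalSeparatedSet hpack]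
    exact hpack
  refine ⟨hfin.toFinset, ?_, ?_, ?_⟩ <;> rw [hfin.coe_toFinset]
  exacts [maximalSeparatedSet_subset, isSeparated_maximalSeparatedSet,
    isCover_maximalSeparatedSet hpack]

lemma Metric.IsSeparated.card_mul_measure_closedBall_le {G : Type*} [NormedAddCommGroup G]
    [MeasurableSpace G] [BorelSpace G] {N : Finset G} {δ : ℝ≥0}
    (hN : IsSeparated δ (N : Set G)) (μ : Measure G) [μ.IsAddHaarMeasure] {A : Set G}
    (hA : ∀ n ∈ N, closedBall n (δ / 2) ⊆ A) :
    N.card * μ (closedBall 0 (δ / 2)) ≤ μ A := by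
  have hdisj : (N : Set G).PairwiseDisjoint fun n => closedBall n (δ / 2 : ℝ) := by
    intro n hn n' hn' hne
    refine closedBall_disjoint_closedBall ?_
    have : (δ : ℝ≥0∞) < edist n n' := hN hn hn' hne
    rw [edist_dist, ← ENNReal.ofReal_coe_nnreal,
      ENNReal.ofReal_lt_ofReal_iff_of_nonneg δ.coe_nonneg] at this
    linarith
  calc N.card * μ (closedBall 0 (δ / 2)) = ∑ n ∈ N, μ (closedBall n (δ / 2)) := by
        simp [Measure.addHaar_closedBall_center μ]
    _ = μ (⋃ n ∈ N, closedBall n (δ / 2)) :=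
        (measure_biUnion_finset hdisj fun _ _ => measurableSet_closedBall).symm
    _ ≤ μ A := measure_mono (iUnion₂_subset hA)

section HausdorffGraph

variable {X : Type*} [MetricSpace X] [MeasurableSpace X] [BorelSpace X]

lemma hausdorffMeasure_one_le_of_dist_le_mul {S : Set X} {g : X → ℝ} {K : ℝ≥0}
    (hg : ∀ x ∈ S, ∀ y ∈ S, dist x y ≤ K * dist (g x) (g y)) :
    μH[1] S ≤ K * μH[1] (g '' S) := by
  have hanti : AntilipschitzWith K (g ∘ ((↑) : S → X)) :=
    AntilipschitzWith.of_le_mul_dist fun x y => hg x x.2 y y.2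
  have := hanti.le_hausdorffMeasure_image zero_le_one univ
  rwa [ENNReal.rpow_one, image_comp, image_univ, Subtype.range_coe,
    ← isometry_subtype_coe.hausdorffMeasure_image (Or.inl zero_le_one), image_univ,
    Subtype.range_coe] at this

lemma hausdorffMeasure_one_le_of_dist_le_mul_of_mapsTo_Icc {S : Set X} {g : X → ℝ} {K : ℝ≥0}
    {a b : ℝ} (hg : ∀ x ∈ S, ∀ y ∈ S, dist x y ≤ K * dist (g x) (g y))
    (hab : MapsTo g S (Icc a b)) :
    μH[1] S ≤ K * ENNReal.ofReal (b - a) := by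
  refine (hausdorffMeasure_one_le_of_dist_le_mul hg).trans (mul_le_mul_right ?_ _)
  rw [hausdorffMeasure_real, ← Real.volume_Icc]
  exact measure_mono hab.image_subset

end HausdorffGraph

section InnerProductSpace

variable {F : Type*} [NormedAddCommGroup F] [InnerProductSpace ℝ F]

lemma neg_sq_le_two_inner_of_norm_le {x y z : F} (h : ‖x - z‖ ≤ ‖y - z‖) :
    -‖y - x‖ ^ 2 ≤ 2 * ⟪y - x, x - z⟫ := by
  have hyz : y - z = (y - x) + (x - z) := by abel
  have := pow_le_pow_left₀ (norm_nonneg _) h 2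
  rw [hyz, norm_add_sq_real] at this
  linarith

lemma two_mul_abs_inner_sub_le {x y z z' a : F} {ε : ℝ}
    (hx : ‖x - z‖ ≤ ‖y - z‖) (hy : ‖y - z'‖ ≤ ‖x - z'‖)
    (hxa : ‖x - z - a‖ ≤ ε) (hya : ‖y - z' - a‖ ≤ ε) :
    2 * |⟪y - x, a⟫| ≤ ‖y - x‖ ^ 2 + 2 * ε * ‖y - x‖ := by
  have h₁ := neg_sq_le_two_inner_of_norm_le hx
  have h₂ := neg_sq_le_two_inner_of_norm_le hy
  rw [← neg_sub y x, inner_neg_left, norm_neg] at h₂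
  have e₁ : ⟪y - x, a⟫ = ⟪y - x, x - z⟫ - ⟪y - x, x - z - a⟫ := by
    rw [← inner_sub_right, sub_sub_cancel]
  have e₂ : ⟪y - x, a⟫ = ⟪y - x, y - z'⟫ - ⟪y - x, y - z' - a⟫ := by
    rw [← inner_sub_right, sub_sub_cancel]
  have c₁ := (abs_real_inner_le_norm (y - x) (x - z - a)).trans
    (mul_le_mul_of_nonneg_left hxa (norm_nonneg _))
  have c₂ := (abs_real_inner_le_norm (y - x) (y - z' - a)).trans
    (mul_le_mul_of_nonneg_left hya (norm_nonneg _))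
  rw [abs_le] at c₁ c₂
  rcases abs_cases ⟪y - x, a⟫ with ⟨h, -⟩ | ⟨h, -⟩ <;> rw [h] <;> linarith

lemma norm_sub_norm_smul_le_of_sq_le_two_mul_inner_sq {w e : F} (he : ‖e‖ = 1)
    (hpos : 0 ≤ ⟪e, w⟫) (hsq : ‖w‖ ^ 2 ≤ 2 * ⟪e, w⟫ ^ 2) : ‖w - ‖w‖ • e‖ ≤ 4 / 5 * ‖w‖ := by
  have hp : 7 / 10 * ‖w‖ ≤ ⟪e, w⟫ := by nlinarith [norm_nonneg w]
  have : ‖w - ‖w‖ • e‖ ^ 2 ≤ (4 / 5 * ‖w‖) ^ 2 := by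
    rw [norm_sub_sq_real, norm_smul, real_inner_smul_right, real_inner_comm, he,
      Real.norm_of_nonneg (norm_nonneg w)]
    nlinarith [norm_nonneg w]
  exact (pow_le_pow_iff_left₀ (norm_nonneg _) (by positivity) two_ne_zero).1 this

end InnerProductSpace

section Plane

variable {F : Type*} [NormedAddCommGroup F] [InnerProductSpace ℝ F]
  [Fact (Module.finrank ℝ F = 2)] (o : Orientation ℝ F (Fin 2))

local notation "ω" => o.areaForm
local notation "J" => o.rightAngleRotation

lemma exists_mem_axes_norm_sub_norm_smul_le [DecidableEq F] {a : F} (ha : ‖a‖ = 1) (w : F) :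
    ∃ e ∈ ({a, -a, J a, -J a} : Finset F), ‖w - ‖w‖ • e‖ ≤ 4 / 5 * ‖w‖ := by
  have hsum := o.inner_sq_add_areaForm_sq a w
  rw [ha, one_pow, one_mul] at hsum
  have hJa : ‖J a‖ = 1 := by rw [LinearIsometryEquiv.norm_map, ha]
  have hJ : ⟪J a, w⟫ = ω a w := o.inner_rightAngleRotation_left a w
  rcases le_total (ω a w ^ 2) (⟪a, w⟫ ^ 2) with h | h
  · rcases le_total 0 ⟪a, w⟫ with hs | hs
    · exact ⟨a, by simp, norm_sub_norm_smul_le_of_sq_le_two_mul_inner_sq ha hs (by linarith)⟩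
    · refine ⟨-a, by simp,
        norm_sub_norm_smul_le_of_sq_le_two_mul_inner_sq (by rwa [norm_neg]) ?_ ?_⟩
      all_goals rw [inner_neg_left]
      · linarith
      · rw [neg_sq]; linarith
  · rcases le_total 0 (ω a w) with hs | hs
    · exact ⟨J a, by simp, norm_sub_norm_smul_le_of_sq_le_two_mul_inner_sq hJa (hJ ▸ hs)
        (by rw [hJ]; linarith)⟩
    · refine ⟨-J a, by simp,
        norm_sub_norm_smul_le_of_sq_le_two_mul_inner_sq (by rwa [norm_neg]) ?_ ?_⟩
      all_goals rw [inner_neg_left, hJ]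
      · linarith
      · rw [neg_sq]; linarith

lemma norm_le_four_mul_abs_areaForm {e v : F} (he : ‖e‖ = 1) (h : |⟪e, v⟫| ≤ 9 / 10 * ‖v‖) :
    ‖v‖ ≤ 4 * |ω e v| := by
  have hsum := o.inner_sq_add_areaForm_sq e v
  rw [he, one_pow, one_mul] at hsum
  have h2 : ⟪e, v⟫ ^ 2 ≤ (9 / 10 * ‖v‖) ^ 2 := by
    rw [← sq_abs]; exact pow_le_pow_left₀ (abs_nonneg _) h 2
  have : ‖v‖ ^ 2 ≤ (4 * |ω e v|) ^ 2 := by nlinarith [sq_abs (ω e v)]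
  exact (pow_le_pow_iff_left₀ (norm_nonneg _) (by positivity) two_ne_zero).1 this

lemma dist_le_four_mul_dist_areaForm {x y z z' e : F} {r : ℝ} (hr : 0 < r) (he : ‖e‖ = 1)
    (hx : dist x z ≤ dist y z) (hy : dist y z' ≤ dist x z')
    (hxe : ‖x - z - r • e‖ ≤ 4 / 5 * r) (hye : ‖y - z' - r • e‖ ≤ 4 / 5 * r)
    (hxy : dist x y ≤ r / 5) :
    dist x y ≤ 4 * dist (ω e x) (ω e y) := by
  rw [dist_eq_norm, dist_eq_norm] at hx hy
  have key := two_mul_abs_inner_sub_le hx hy hxe hye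
  rw [real_inner_smul_right, abs_mul, abs_of_pos hr, real_inner_comm] at key
  have hv : ‖y - x‖ ≤ r / 5 := by rwa [← dist_eq_norm, dist_comm]
  have hinner : |⟪e, y - x⟫| ≤ 9 / 10 * ‖y - x‖ := by
    have : ‖y - x‖ ^ 2 ≤ r / 5 * ‖y - x‖ := by nlinarith [norm_nonneg (y - x)]
    nlinarith [norm_nonneg (y - x), abs_nonneg ⟪e, y - x⟫]
  rw [dist_comm x y, dist_eq_norm, Real.dist_eq, abs_sub_comm, ← map_sub]
  exact norm_le_four_mul_abs_areaForm o he hinner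

end Plane

lemma tendsto_const_mul_nhdsGT_zero {c : ℝ} (hc : 0 < c) :
    Tendsto (c * ·) (𝓝[>] 0) (𝓝[>] 0) := by
  refine tendsto_nhdsWithin_iff.2 ⟨?_, eventually_mem_nhdsWithin.mono fun r hr => mul_pos hc hr⟩
  simpa using (tendsto_id.const_mul c).mono_left (nhdsWithin_le_nhds (a := (0 : ℝ)))

lemma tendsto_abs_log_mul_comp_const_mul {f : ℝ → ℝ} {L c : ℝ} (hc : 0 < c)
    (h : Tendsto (fun r => |Real.log r| * f r) (𝓝[>] 0) (𝓝 L)) :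
    Tendsto (fun r => |Real.log r| * f (c * r)) (𝓝[>] 0) (𝓝 L) := by
  have hlog := Real.tendsto_log_nhdsGT_zero
  have hratio : Tendsto (fun r => |Real.log (c * r) / Real.log r|) (𝓝[>] 0) (𝓝 1) := by
    have : Tendsto (fun r => Real.log c / Real.log r + 1) (𝓝[>] 0) (𝓝 (0 + 1)) :=
      (tendsto_const_nhds.div_atBot hlog).add_const 1
    rw [zero_add] at this
    refine (abs_one (α := ℝ) ▸ this.abs).congr' ?_
    filter_upwards [eventually_mem_nhdsWithin, hlog.eventually_ne_atBot 0] with r hr hr0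
    rw [Real.log_mul hc.ne' (ne_of_gt hr), add_div, div_self hr0]
  have := (h.comp (tendsto_const_mul_nhdsGT_zero hc)).div hratio one_ne_zero
  rw [div_one] at this
  refine this.congr' ?_
  filter_upwards [hlog.eventually_ne_atBot 0,
    (hlog.comp (tendsto_const_mul_nhdsGT_zero hc)).eventually_ne_atBot 0] with r hr hcr
  simp only [Pi.div_apply, Function.comp_apply, abs_div] at hcr ⊢
  field_simp

section ParallelSet

lemma Metric.infDist_eq_of_mem_frontier_cthickening {α : Type*} [PseudoMetricSpace α]
    {Z : Set α} {r : ℝ} {x : α} (hr : 0 ≤ r) (hx : x ∈ frontier (cthickening r Z)) :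
    infDist x Z = r := by
  rw [infDist, frontier_cthickening_subset Z hx, ENNReal.toReal_ofReal hr]

lemma Metric.closedBall_subset_cthickening_diff_cthickening {α : Type*} [PseudoMetricSpace α]
    {Z : Set α} {r δ : ℝ} {x : α} (hδ₀ : 0 ≤ δ) (hδ : δ < r)
    (hx : x ∈ frontier (cthickening r Z)) :
    closedBall x (δ / 2) ⊆ cthickening (2 * r) Z \ cthickening (r / 2) Z := by
  intro p hp
  rw [mem_closedBall] at hp
  have hxZ : infEDist x Z = ENNReal.ofReal r := frontier_cthickening_subset Z hx
  refine ⟨?_, fun hmem => ?_⟩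
  · rw [mem_cthickening_iff]
    calc infEDist p Z ≤ infEDist x Z + edist p x := infEDist_le_infEDist_add_edist
      _ ≤ ENNReal.ofReal r + ENNReal.ofReal (δ / 2) := by
          rw [hxZ, edist_dist]; gcongr
      _ ≤ ENNReal.ofReal (2 * r) := by
          rw [← ENNReal.ofReal_add (by linarith) (by linarith)]
          exact ENNReal.ofReal_le_ofReal (by linarith)
  · have hp' : infDist p Z ≤ r / 2 :=
      ENNReal.toReal_le_of_le_ofReal (by linarith) (mem_cthickening_iff.1 hmem)
    have := infDist_le_infDist_add_dist (x := x) (y := p) (s := Z)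
    rw [infDist_eq_of_mem_frontier_cthickening (by linarith) hx, dist_comm] at this
    linarith

variable {F : Type*} [NormedAddCommGroup F] [InnerProductSpace ℝ F]

/-- `4 / 5` exceeds `√(2 - √2)`, the largest distance from a unit vector to the nearest of
`±a, ±J a`, and still gives `|⟪e, y - x⟫| ≤ 9 / 10 * ‖y - x‖` in
`dist_le_four_mul_dist_areaForm`. -/
def normalCone (Z : Set F) (r : ℝ) (e : F) : Set F :=
  {x | ∃ z ∈ Z, dist x z = r ∧ ‖x - z - r • e‖ ≤ 4 / 5 * r}

variable [Fact (Module.finrank ℝ F = 2)] {Z : Set F} {r : ℝ}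

attribute [local instance] FiniteDimensional.of_fact_finrank_eq_two

lemma exists_finset_frontier_cthickening_subset_normalCone (hZ : IsCompact Z) (hne : Z.Nonempty)
    (hr : 0 ≤ r) : ∃ D : Finset F, D.card ≤ 4 ∧ (∀ e ∈ D, ‖e‖ = 1) ∧
      frontier (cthickening r Z) ⊆ ⋃ e ∈ D, normalCone Z r e := by
  classical
  let o : Orientation ℝ F (Fin 2) := (Module.finBasisOfFinrankEq ℝ F Fact.out).orientation
  have : Nontrivial F := Module.nontrivial_of_finrank_eq_succ (Fact.out : Module.finrank ℝ F = 2)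
  obtain ⟨a, ha⟩ := exists_norm_eq F zero_le_one
  refine ⟨{a, -a, o.rightAngleRotation a, -o.rightAngleRotation a}, Finset.card_le_four, ?_, ?_⟩
  · simp [ha]
  · intro x hx
    obtain ⟨z, hz, hxz⟩ := hZ.exists_infDist_eq_dist hne x
    rw [infDist_eq_of_mem_frontier_cthickening hr hx] at hxz
    obtain ⟨e, he, hsec⟩ := exists_mem_axes_norm_sub_norm_smul_le o ha (x - z)
    rw [← dist_eq_norm x z, ← hxz] at hsec
    exact mem_biUnion he ⟨z, hz, hxz.symm, hsec⟩

variable [MeasurableSpace F] [BorelSpace F]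

instance isAddHaarMeasure_hausdorffMeasure_two : (μH[2] : Measure F).IsAddHaarMeasure := by
  have := isAddHaarMeasure_hausdorffMeasure (E := F)
  rwa [(Fact.out : Module.finrank ℝ F = 2), Nat.cast_ofNat] at this

lemma hausdorffMeasure_frontier_cthickening_inter_normalCone_le (hr : 0 < r) {e : F}
    (he : ‖e‖ = 1) (n : F) {δ : ℝ} (hδ : δ ≤ r / 10) :
    μH[1] (frontier (cthickening r Z) ∩ closedBall n δ ∩ normalCone Z r e) ≤
      4 * ENNReal.ofReal (2 * δ) := by
  let o : Orientation ℝ F (Fin 2) := (Module.finBasisOfFinrankEq ℝ F Fact.out).orientation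
  have hmaps : MapsTo (o.areaForm e) (closedBall n δ)
      (Icc (o.areaForm e n - δ) (o.areaForm e n + δ)) := by
    intro x hx
    rw [mem_closedBall, dist_eq_norm] at hx
    have hω := o.abs_areaForm_le e (x - n)
    rw [he, one_mul, map_sub, abs_le] at hω
    constructor <;> linarith
  have := hausdorffMeasure_one_le_of_dist_le_mul_of_mapsTo_Icc (K := 4) ?_
    (hmaps.mono_left fun x (hx : x ∈ frontier (cthickening r Z) ∩ closedBall n δ ∩
      normalCone Z r e) => hx.1.2)
  · convert this using 3
    · norm_num
    · ring
  rintro x ⟨⟨hxK, hxn⟩, z, hz, hxz, hxe⟩ y ⟨⟨hyK, hyn⟩, z', hz', hyz', hye⟩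
  refine dist_le_four_mul_dist_areaForm o hr he ?_ ?_ hxe hye ?_
  · rw [hxz, ← infDist_eq_of_mem_frontier_cthickening hr.le hyK]
    exact infDist_le_dist_of_mem hz
  · rw [hyz', ← infDist_eq_of_mem_frontier_cthickening hr.le hxK]
    exact infDist_le_dist_of_mem hz'
  · have := dist_triangle_right x y n
    rw [mem_closedBall] at hxn hyn
    linarith

lemma hausdorffMeasure_frontier_cthickening_le_card_mul (hZ : IsCompact Z) (hne : Z.Nonempty)
    (hr : 0 < r) {N : Finset F} {δ : ℝ≥0} (hδ : δ ≤ r / 10)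
    (hN : IsCover δ (frontier (cthickening r Z)) N) :
    μH[1] (frontier (cthickening r Z)) ≤ N.card * (4 * (4 * ENNReal.ofReal (2 * δ))) := by
  classical
  set K := frontier (cthickening r Z)
  obtain ⟨D, hDcard, hDunit, hKD⟩ :=
    exists_finset_frontier_cthickening_subset_normalCone hZ hne hr.le
  have hcover : K ⊆ ⋃ n ∈ N, ⋃ e ∈ D, K ∩ closedBall n δ ∩ normalCone Z r e := by
    intro x hx
    obtain ⟨n, hn, hxn⟩ := mem_iUnion₂.1 (hN.subset_iUnion_closedBall hx)
    obtain ⟨e, he, hxe⟩ := mem_iUnion₂.1 (hKD hx)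
    exact mem_biUnion hn (mem_biUnion he ⟨⟨hx, hxn⟩, hxe⟩)
  calc μH[1] K
      ≤ ∑ n ∈ N, ∑ e ∈ D, μH[1] (K ∩ closedBall n δ ∩ normalCone Z r e) :=
        (measure_mono hcover).trans <| (measure_biUnion_finset_le _ _).trans <|
          Finset.sum_le_sum fun n _ => measure_biUnion_finset_le _ _
    _ ≤ ∑ _n ∈ N, ∑ _e ∈ D, 4 * ENNReal.ofReal (2 * δ) :=
        Finset.sum_le_sum fun n _ => Finset.sum_le_sum fun e he =>
          hausdorffMeasure_frontier_cthickening_inter_normalCone_le hr (hDunit e he) n hδ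
    _ ≤ N.card * (4 * (4 * ENNReal.ofReal (2 * δ))) := by
        simp only [Finset.sum_const, nsmul_eq_mul]
        gcongr
        exact_mod_cast hDcard

theorem hausdorffMeasure_frontier_cthickening_mul_le (hZ : IsCompact Z) (hne : Z.Nonempty)
    (hr : 0 < r) :
    μH[1] (frontier (cthickening r Z)) * (ENNReal.ofReal r * μH[2] (ball (0 : F) 1)) ≤
      1280 * μH[2] (cthickening (2 * r) Z \ cthickening (r / 2) Z) := by
  set K := frontier (cthickening r Z)
  set c := μH[2] (ball (0 : F) 1)
  have hK : IsCompact K :=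
    hZ.cthickening.of_isClosed_subset isClosed_frontier isClosed_cthickening.frontier_subset
  let δ : ℝ≥0 := ⟨r / 10, by positivity⟩
  obtain ⟨N, hNK, hNsep, hNcov⟩ := hK.exists_finset_isSeparated_isCover (ε := δ)
    (ne_of_gt (show (0 : ℝ) < r / 10 by positivity))
  have hlength := hausdorffMeasure_frontier_cthickening_le_card_mul hZ hne hr le_rfl hNcov
  have hpacking := hNsep.card_mul_measure_closedBall_le μH[2] fun n hn =>
    closedBall_subset_cthickening_diff_cthickening δ.coe_nonneg
      (show r / 10 < r by linarith) (hNK hn)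
  rw [Measure.addHaar_closedBall _ _ (by positivity), (Fact.out : Module.finrank ℝ F = 2)]
    at hpacking
  have hconst : 4 * (4 * ENNReal.ofReal (2 * δ)) * ENNReal.ofReal r =
      1280 * ENNReal.ofReal ((δ / 2 : ℝ) ^ 2) := by
    rw [← ENNReal.ofReal_ofNat 4, ← ENNReal.ofReal_ofNat 1280, ← ENNReal.ofReal_mul,
      ← ENNReal.ofReal_mul, ← ENNReal.ofReal_mul, ← ENNReal.ofReal_mul]
    · congr 1
      rw [show (δ : ℝ) = r / 10 from rfl]
      ring
    all_goals positivity
  calc μH[1] K * (ENNReal.ofReal r * c)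
      ≤ N.card * (4 * (4 * ENNReal.ofReal (2 * δ))) * (ENNReal.ofReal r * c) := by gcongr
    _ = N.card * c * (4 * (4 * ENNReal.ofReal (2 * δ)) * ENNReal.ofReal r) := by ring
    _ = 1280 * (N.card * (ENNReal.ofReal ((δ / 2 : ℝ) ^ 2) * c)) := by rw [hconst]; ring
    _ ≤ 1280 * μH[2] (cthickening (2 * r) Z \ cthickening (r / 2) Z) := by gcongr

lemma mul_toReal_hausdorffMeasure_frontier_cthickening_le (hZ : IsCompact Z) (hne : Z.Nonempty)
    (hr : 0 < r) :
    r * (μH[1] (frontier (cthickening r Z))).toReal * (μH[2] (ball (0 : F) 1)).toReal ≤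
      1280 * ((μH[2] (cthickening (2 * r) Z)).toReal - (μH[2] (cthickening (r / 2) Z)).toReal) := by
  have hsub : cthickening (r / 2) Z ⊆ cthickening (2 * r) Z := cthickening_mono (by linarith) Z
  have hfin : μH[2] (cthickening (2 * r) Z) ≠ ∞ := hZ.cthickening.measure_lt_top.ne
  have hannulus : (μH[2] (cthickening (2 * r) Z \ cthickening (r / 2) Z)).toReal =
      (μH[2] (cthickening (2 * r) Z)).toReal - (μH[2] (cthickening (r / 2) Z)).toReal := by
    rw [measure_sdiff hsub isClosed_cthickening.nullMeasurableSet (ne_top_of_le_ne_top hfin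
      (measure_mono hsub)), ENNReal.toReal_sub_of_le (measure_mono hsub) hfin]
  have := ENNReal.toReal_mono (ENNReal.mul_ne_top (by simp)
    (ne_top_of_le_ne_top hfin (measure_mono sdiff_subset)))
    (hausdorffMeasure_frontier_cthickening_mul_le hZ hne hr)
  rwa [ENNReal.toReal_mul, ENNReal.toReal_mul, ENNReal.toReal_mul, ENNReal.toReal_ofReal hr.le,
    hannulus, ← mul_assoc, mul_comm _ r] at this

theorem tendsto_mul_abs_log_mul_hausdorffMeasure_frontier_cthickening (hZ : IsCompact Z)
    (hne : Z.Nonempty) {L : ℝ}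
    (h : Tendsto (fun r => |Real.log r| * (μH[2] (cthickening r Z)).toReal) (𝓝[>] 0) (𝓝 L)) :
    Tendsto (fun r => r * |Real.log r| * (μH[1] (frontier (cthickening r Z))).toReal)
      (𝓝[>] 0) (𝓝 0) := by
  set V := fun t => (μH[2] (cthickening t Z)).toReal
  set c := (μH[2] (ball (0 : F) 1)).toReal
  have hc : 0 < c := ENNReal.toReal_pos (measure_ball_pos _ _ one_pos).ne'
    measure_ball_lt_top.ne
  have hbound : Tendsto (fun r => 1280 / c * (|Real.log r| * V (2 * r) - |Real.log r| * V (r / 2)))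
      (𝓝[>] 0) (𝓝 0) := by
    have hhalf := tendsto_abs_log_mul_comp_const_mul (one_half_pos (α := ℝ)) h
    simp only [one_div_mul_eq_div] at hhalf
    simpa using ((tendsto_abs_log_mul_comp_const_mul two_pos h).sub hhalf).const_mul (1280 / c)
  refine squeeze_zero' ?_ ?_ hbound
  · filter_upwards [eventually_mem_nhdsWithin] with r (hr : 0 < r)
    positivity
  · filter_upwards [eventually_mem_nhdsWithin] with r (hr : 0 < r)
    rw [← mul_sub, div_mul_eq_mul_div, le_div_iff₀ hc]
    calc r * |Real.log r| * (μH[1] (frontier (cthickening r Z))).toReal * c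
        = |Real.log r| * (r * (μH[1] (frontier (cthickening r Z))).toReal * c) := by ring
      _ ≤ |Real.log r| * (1280 * (V (2 * r) - V (r / 2))) :=
          mul_le_mul_of_nonneg_left
            (mul_toReal_hausdorffMeasure_frontier_cthickening_le hZ hne hr) (abs_nonneg _)
      _ = 1280 * (|Real.log r| * (V (2 * r) - V (r / 2))) := by ring

end ParallelSet

theorem stmt_18_general (Ω : Type*) [MeasureSpace Ω]
    (Z : Ω → NonemptyCompacts (EuclideanSpace ℝ (Fin 2)))
    (hvol : ∀ᵐ ω ∂(volume : Measure Ω),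
      Filter.Tendsto
        (fun r : ℝ => |Real.log r| *
          (μH[(2 : ℝ)] (Metric.cthickening r (Z ω : Set (EuclideanSpace ℝ (Fin 2))))).toReal)
        (𝓝[>] 0) (𝓝 Real.pi)) :
    ∀ᵐ ω ∂(volume : Measure Ω),
      Filter.limsup
          (fun r : ℝ => ((r * |Real.log r| *
            (μH[(1 : ℝ)]
              (frontier (Metric.cthickening r (Z ω : Set (EuclideanSpace ℝ (Fin 2)))))).toReal : ℝ) :
              EReal))
          (𝓝[>] 0) ≤ ((2 * Real.pi : ℝ) : EReal) := by
  have : Fact (Module.finrank ℝ (EuclideanSpace ℝ (Fin 2)) = 2) := ⟨finrank_euclideanSpace_fin⟩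
  filter_upwards [hvol] with ω hω
  have hlim := tendsto_mul_abs_log_mul_hausdorffMeasure_frontier_cthickening
    (Z ω).isCompact (Z ω).nonempty hω
  rw [(EReal.tendsto_coe.2 hlim).limsup_eq]
  exact EReal.coe_le_coe_iff.2 (by positivity)

theorem stmt_18 (Ω : Type*) [MeasureSpace Ω]
    [IsProbabilityMeasure (volume : Measure Ω)]
    (Z : Ω → NonemptyCompacts (EuclideanSpace ℝ (Fin 2)))
    (hvol : ∀ᵐ ω ∂(volume : Measure Ω),
      Filter.Tendsto
        (fun r : ℝ => |Real.log r| *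
          (μH[(2 : ℝ)] (Metric.cthickening r (Z ω : Set (EuclideanSpace ℝ (Fin 2))))).toReal)
        (𝓝[>] 0) (𝓝 Real.pi)) :
    ∀ᵐ ω ∂(volume : Measure Ω),
      Filter.limsup
          (fun r : ℝ => ((r * |Real.log r| *
            (μH[(1 : ℝ)]
              (frontier (Metric.cthickening r (Z ω : Set (EuclideanSpace ℝ (Fin 2)))))).toReal : ℝ) :
              EReal))
          (𝓝[>] 0) ≤ ((2 * Real.pi : ℝ) : EReal) :=
  stmt_18_general Ω Z hvol
end
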